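/- Theorem 6: Let G be a representable Menger (2,n)-semigroup and π a binary relation on G. The following are equivalent: (i) π is projection representable for G; (ii) π is faithfully projection representable for G; (iii) π is an l-regular equivalence relation with χ(π) ∩ χ(π)⁻¹ ⊆ π. -/

import Mathlib

universe u

/-- A partial `n`-place function on `A` (`none` = undefined). -/
abbrev NPlace (A : Type u) (n : ℕ) := (Fin n → A) → Option A

/-- The domain of a partial `n`-place function. -/
def pdom {A : Type u} {n : ℕ} (f : NPlace A n) : Set (Fin n → A) :=
  {a | (f a).isSome}

/-- Superposition `f[g₁…gₙ]` of partial `n`-place functions. -/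
def superpose {A : Type u} {n : ℕ} (f : NPlace A n) (g : Fin n → NPlace A n) : NPlace A n :=
  fun a => if h : ∀ i, (g i a).isSome then f (fun i => (g i a).get (h i)) else none

/-- The binary composition `f ∘ᵢ g` of partial `n`-place functions. -/
def opc {A : Type u} {n : ℕ} (i : Fin n) (f g : NPlace A n) : NPlace A n :=
  fun a => (g a).bind fun b => f (Function.update a i b)

/-- A Menger (2,n)-semigroup: an (n+1)-ary superassociative operation `sup`
(written `x[y₁…yₙ]`) together with `n` associative binary operations `op i`. -/
structure MengerSg (G : Type u) (n : ℕ) where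
  sup : G → (Fin n → G) → G
  op : Fin n → G → G → G
  superassoc : ∀ (x : G) (y z : Fin n → G),
    sup (sup x y) z = sup x fun i => sup (y i) z
  op_assoc : ∀ (i : Fin n) (x y z : G), op i (op i x y) z = op i x (op i y z)

namespace MengerSg

variable {G : Type u} {n : ℕ}

/-- Applying a composition string `L = [(i₁,y₁),…,(i_s,y_s)]` to `x`:
`x ∘_{i₁} y₁ ∘_{i₂} y₂ ⋯ ∘_{i_s} y_s` (left to right). -/
def applyStr (M : MengerSg G n) (x : G) (L : List (Fin n × G)) : G :=
  L.foldl (fun a p => M.op p.1 a p.2) x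

/-- `μᵢ(L)`: if `i` occurs in the composition string `L` with least position `k`,
this is `some (yₖ ∘_{i_{k+1}} y_{k+1} ⋯ ∘_{i_s} y_s)`; otherwise `none`. -/
def mu (M : MengerSg G n) (i : Fin n) : List (Fin n × G) → Option G
  | [] => none
  | p :: rest => if p.1 = i then some (applyStr M p.2 rest) else mu M i rest

/-- Conditions (4)–(7): the Menger (2,n)-semigroup is representable. -/
def Representable (M : MengerSg G n) : Prop :=
  (∀ L₁ L₂ : List (Fin n × G), L₁ ≠ [] → L₂ ≠ [] →
      (∀ i, mu M i L₁ = mu M i L₂) → ∀ g, applyStr M g L₁ = applyStr M g L₂) ∧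
  (∀ (i : Fin n) (x y : G) (z : Fin n → G),
      M.sup (M.op i x y) z = M.sup x (Function.update z i (M.sup y z))) ∧
  (∀ (i : Fin n) (x : G) (y : Fin n → G) (z : G),
      M.op i (M.sup x y) z = M.sup x fun j => M.op i (y j) z) ∧
  (∀ L : List (Fin n × G), L ≠ [] → ∀ m : Fin n → G,
      (∀ i, mu M i L = some (m i)) → ∀ x, applyStr M x L = M.sup x m)

/-- A binary relation is l-regular. -/
def LRegular (M : MengerSg G n) (r : G → G → Prop) : Prop :=
  ∀ x y, r x y →
    (∀ z : Fin n → G, r (M.sup x z) (M.sup y z)) ∧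
    (∀ (i : Fin n) (z : G), r (M.op i x z) (M.op i y z))

/-- A binary relation is l-cancellative. -/
def LCancellative (M : MengerSg G n) (r : G → G → Prop) : Prop :=
  (∀ (x y : G) (z : Fin n → G), r (M.sup x z) (M.sup y z) → r x y) ∧
  (∀ (x y : G) (i : Fin n) (z : G), r (M.op i x z) (M.op i y z) → r x y)

/-- A binary relation is v-negative. -/
def VNegative (M : MengerSg G n) (r : G → G → Prop) : Prop :=
  (∀ (x : G) (y : Fin n → G) (i : Fin n), r (M.sup x y) (y i)) ∧
  (∀ (x : G) (L : List (Fin n × G)), L ≠ [] →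
      ∀ (j : Fin n) (m : G), mu M j L = some m → r (applyStr M x L) m)

/-- A quasi-order is a reflexive and transitive relation. -/
def QuasiOrder (r : G → G → Prop) : Prop := Reflexive r ∧ Transitive r

/-- `z` is a zero of the Menger (2,n)-semigroup. -/
def IsZero (M : MengerSg G n) (z : G) : Prop :=
  (∀ (i : Fin n) (g : G), M.op i z g = z ∧ M.op i g z = z) ∧
  (∀ g : Fin n → G, M.sup z g = z) ∧
  (∀ (g : G) (gs : Fin n → G) (i : Fin n), M.sup g (Function.update gs i z) = z)

/-- A 0-quasi-equivalence: a symmetric relation which is reflexive at every non-zero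
element, and such that any zero related to something is related to itself. -/
def ZeroQuasiEquiv (M : MengerSg G n) (r : G → G → Prop) : Prop :=
  Symmetric r ∧ (∀ g, ¬ M.IsZero g → r g g) ∧
  (∀ z, M.IsZero z → (∃ h, r z h) → r z z)

/-- `P` is a representation of the Menger (2,n)-semigroup by `n`-place functions. -/
def IsRep (M : MengerSg G n) {A : Type u} (P : G → NPlace A n) : Prop :=
  (∀ (x : G) (y : Fin n → G), P (M.sup x y) = superpose (P x) fun i => P (y i)) ∧
  (∀ (i : Fin n) (x y : G), P (M.op i x y) = opc i (P x) (P y))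

/-- The set `Tₙ(G)` of translations: the least set of maps `G → G` containing the
identity and closed under `t ↦ (x ↦ a[b₁…b_{i−1} t(x) b_{i+1}…bₙ])`. -/
inductive IsTransl (M : MengerSg G n) : (G → G) → Prop
  | id : IsTransl M _root_.id
  | step (t : G → G) (ht : IsTransl M t) (i : Fin n) (a : G) (b : Fin n → G) :
      IsTransl M fun x => M.sup a (Function.update b i (t x))

/-- The relation `δ₁`: `g₁ = t(g₂)` for some `t ∈ Tₙ(G)`. -/
def delta1 (M : MengerSg G n) : G → G → Prop :=
  fun g₁ g₂ => ∃ t : G → G, IsTransl M t ∧ g₁ = t g₂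

/-- The relation `δ₂`: `g₁ = (x∘_{i₁}y₁⋯∘_{i_s}y_s)` and `g₂ = μᵢ(L)`, possibly both
superposed with a common `z̄ ∈ Gⁿ`. -/
def delta2 (M : MengerSg G n) : G → G → Prop :=
  fun g₁ g₂ => ∃ (x : G) (L : List (Fin n × G)) (i : Fin n) (m : G),
    L ≠ [] ∧ mu M i L = some m ∧
    ((g₁ = applyStr M x L ∧ g₂ = m) ∨
      ∃ z : Fin n → G, g₁ = M.sup (applyStr M x L) z ∧ g₂ = M.sup m z)

/-- `χ(π)`: the transitive closure of `(δ₂ ∪ Δ_G) ∘ δ₁ ∘ π` (relations applied right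
to left in the paper's notation, i.e. first `π`, then `δ₁`, then `δ₂ ∪ Δ_G`). -/
def chiRel (M : MengerSg G n) (π : G → G → Prop) : G → G → Prop :=
  Relation.TransGen
    (Relation.Comp (Relation.Comp π (delta1 M)) fun a b => delta2 M a b ∨ a = b)

/-- `χ₀`: the transitive closure of `(δ₂ ∪ Δ_G) ∘ δ₁`. -/
def chi0 (M : MengerSg G n) : G → G → Prop :=
  Relation.TransGen
    (Relation.Comp (delta1 M) fun a b => delta2 M a b ∨ a = b)

end MengerSg

open MengerSg

/-!
Necessity: in a representation, `dom P(x[y]) ⊆ dom P(yᵢ)` and `dom P(x ∘ᵢ y) ⊆ dom P(y)`, while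
the domains of `x[y]` and `x ∘ᵢ y` depend monotonically on `dom P(x)`. So each of `π`, `δ₁`, `δ₂`
shrinks domains, hence so does `χ(π)`, and `χ(π) ∩ χ(π)⁻¹` relates elements with equal domains.

Sufficiency: tuples `s` of elements of `G` in which some entries are placeholders for projections
are acted on by `G` (`eval`); conditions (4)–(7) make this a representation, faithful because of
the all-placeholder tuple. Taking a copy of it for every `b ∈ G` and keeping in the copy only the
values `c` with `b χ(π) c` yields a faithful representation in which `g` is defined at the constant
placeholder tuple over `b` iff `b χ(π) g`. Its domains are preserved by `π` (l-regularity), and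
equal domains give `g₁ χ(π) g₂ χ(π) g₁`, hence `g₁ π g₂`.
-/

section NPlaceLemmas

variable {A : Type u} {n : ℕ}

theorem pdom_superpose_subset (f : NPlace A n) (g : Fin n → NPlace A n) (i : Fin n) :
    pdom (superpose f g) ⊆ pdom (g i) := by
  intro a ha
  simp only [pdom, superpose, Set.mem_ofPred_eq] at ha ⊢
  split at ha
  · next h => exact h i
  · simp at ha

theorem pdom_superpose_mono {f f' : NPlace A n} (h : pdom f ⊆ pdom f') (g : Fin n → NPlace A n) :
    pdom (superpose f g) ⊆ pdom (superpose f' g) := by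
  intro a ha
  simp only [pdom, superpose, Set.mem_ofPred_eq] at ha ⊢
  split at ha
  · next hg => rw [dif_pos hg]; exact h ha
  · simp at ha

theorem pdom_opc_subset (i : Fin n) (f g : NPlace A n) : pdom (opc i f g) ⊆ pdom g := by
  intro a ha
  simp only [pdom, opc, Set.mem_ofPred_eq, Option.isSome_bind] at ha ⊢
  cases hg : g a <;> simp_all

theorem pdom_opc_mono (i : Fin n) {f f' : NPlace A n} (h : pdom f ⊆ pdom f') (g : NPlace A n) :
    pdom (opc i f g) ⊆ pdom (opc i f' g) := by
  intro a ha
  simp only [pdom, opc, Set.mem_ofPred_eq] at ha ⊢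
  cases hg : g a with
  | none => simp [hg] at ha
  | some b => simp only [hg, Option.bind_some] at ha ⊢; exact h ha

end NPlaceLemmas

namespace NPlace

variable {K A : Type u} {n : ℕ}

open Classical in
noncomputable def amplify (hn : 1 ≤ n) (f : NPlace A n) : NPlace (K × A) n := fun a =>
  if ∀ i, (a i).1 = (a ⟨0, hn⟩).1 then (f fun i => (a i).2).map (Prod.mk (a ⟨0, hn⟩).1)
  else none

theorem amplify_const (hn : 1 ≤ n) (f : NPlace A n) (k : K) (s : Fin n → A) :
    amplify hn f (fun i => (k, s i)) = (f s).map (Prod.mk k) := by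
  simp [amplify]

theorem amplify_superpose (hn : 1 ≤ n) (f : NPlace A n) (g : Fin n → NPlace A n) :
    amplify (K := K) hn (superpose f g) = superpose (amplify hn f) fun i => amplify hn (g i) := by
  funext a
  by_cases ha : ∀ i, (a i).1 = (a ⟨0, hn⟩).1
  · obtain ⟨k, s, rfl⟩ : ∃ (k : K) (s : Fin n → A), a = fun i => (k, s i) :=
      ⟨(a ⟨0, hn⟩).1, fun i => (a i).2, funext fun i => Prod.ext (ha i) rfl⟩
    simp only [superpose, amplify_const, Option.isSome_map, Option.get_map]
    split <;> rfl
  · have h0 : amplify hn (g ⟨0, hn⟩) a = none := by rw [amplify, if_neg ha]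
    rw [amplify, if_neg ha, superpose, dif_neg]
    intro h
    simpa [h0] using h ⟨0, hn⟩

theorem amplify_opc (hn : 1 ≤ n) (i : Fin n) (f g : NPlace A n) :
    amplify (K := K) hn (opc i f g) = opc i (amplify hn f) (amplify hn g) := by
  funext a
  by_cases ha : ∀ i, (a i).1 = (a ⟨0, hn⟩).1
  · obtain ⟨k, s, rfl⟩ : ∃ (k : K) (s : Fin n → A), a = fun i => (k, s i) :=
      ⟨(a ⟨0, hn⟩).1, fun i => (a i).2, funext fun i => Prod.ext (ha i) rfl⟩
    have hupd : ∀ v, Function.update (fun j => (k, s j)) i (k, v)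
        = fun j => (k, Function.update s i v j) := fun v => by
      funext j; by_cases hj : j = i <;> simp [hj]
    simp only [opc, amplify_const, Option.map_bind, Option.bind_map, Function.comp_def, hupd]
  · simp only [opc]
    rw [amplify, if_neg ha, amplify, if_neg ha, Option.bind_none]

def outputsIn (f : NPlace A n) (U : Set A) : Set (Fin n → A) :=
  {a | ∃ v ∈ U, f a = some v}

theorem mem_outputsIn {f : NPlace A n} {U : Set A} {a : Fin n → A} :
    a ∈ outputsIn f U ↔ ∃ v ∈ U, f a = some v := Iff.rfl

open Classical in
noncomputable def restrict (f : NPlace A n) (U : Set A) : NPlace A n := fun a =>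
  if a ∈ outputsIn f U then f a else none

theorem pdom_restrict (f : NPlace A n) (U : Set A) : pdom (restrict f U) = outputsIn f U := by
  ext a
  by_cases ha : a ∈ outputsIn f U
  · obtain ⟨v, -, hv⟩ := id ha
    simp [pdom, restrict, ha, hv]
  · simp [pdom, restrict, ha]

theorem restrict_of_mem {f : NPlace A n} {U : Set A} {a : Fin n → A} (ha : a ∈ outputsIn f U) :
    restrict f U a = f a := if_pos ha

theorem restrict_of_notMem {f : NPlace A n} {U : Set A} {a : Fin n → A}
    (ha : a ∉ outputsIn f U) : restrict f U a = none := if_neg ha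

theorem restrict_congr {f g : NPlace A n} {U : Set A} {a b : Fin n → A} (h : f a = g b) :
    restrict f U a = restrict g U b := by
  have hmem : a ∈ outputsIn f U ↔ b ∈ outputsIn g U := by simp only [mem_outputsIn, h]
  by_cases ha : a ∈ outputsIn f U
  · rw [restrict_of_mem ha, restrict_of_mem (hmem.1 ha), h]
  · rw [restrict_of_notMem ha, restrict_of_notMem (mt hmem.2 ha)]

theorem restrict_superpose {f : NPlace A n} {g : Fin n → NPlace A n} {U : Set A}
    (h : ∀ i, outputsIn (superpose f g) U ⊆ outputsIn (g i) U) :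
    restrict (superpose f g) U = superpose (restrict f U) fun i => restrict (g i) U := by
  funext a
  by_cases hg : ∀ i, a ∈ outputsIn (g i) U
  · have hsome : ∀ i, (g i a).isSome := fun i => by
      obtain ⟨v, -, hv⟩ := hg i; simp [hv]
    have hr : ∀ i, restrict (g i) U a = g i a := fun i => restrict_of_mem (hg i)
    simp only [superpose, hr, dif_pos hsome]
    exact restrict_congr (dif_pos hsome)
  · obtain ⟨i, hi⟩ := not_forall.mp hg
    rw [restrict_of_notMem fun ha => hi (h i ha), superpose, dif_neg]
    intro hall
    simpa [restrict_of_notMem hi] using hall i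

theorem restrict_opc {i : Fin n} {f g : NPlace A n} {U : Set A}
    (h : outputsIn (opc i f g) U ⊆ outputsIn g U) :
    restrict (opc i f g) U = opc i (restrict f U) (restrict g U) := by
  funext a
  by_cases hg : a ∈ outputsIn g U
  · obtain ⟨v, -, hv⟩ := id hg
    rw [opc, restrict_of_mem hg, hv, Option.bind_some]
    exact restrict_congr (by rw [opc, hv, Option.bind_some])
  · rw [restrict_of_notMem fun ha => hg (h ha), opc, restrict_of_notMem hg, Option.bind_none]

end NPlace

namespace MengerSg

variable {G : Type u} {n : ℕ} {M : MengerSg G n}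

theorem IsRep.amplify {K A : Type u} {P : G → NPlace A n} (hn : 1 ≤ n) (hP : M.IsRep P) :
    M.IsRep fun g => NPlace.amplify (K := K) hn (P g) :=
  ⟨fun x y => by dsimp only; rw [hP.1, NPlace.amplify_superpose],
    fun i x y => by dsimp only; rw [hP.2, NPlace.amplify_opc]⟩

theorem IsRep.restrict {A : Type u} {P : G → NPlace A n} (hP : M.IsRep P) {U : Set A}
    (hsup : ∀ x y i, NPlace.outputsIn (P (M.sup x y)) U ⊆ NPlace.outputsIn (P (y i)) U)
    (hop : ∀ i x y, NPlace.outputsIn (P (M.op i x y)) U ⊆ NPlace.outputsIn (P y) U) :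
    M.IsRep fun g => NPlace.restrict (P g) U :=
  ⟨fun x y => by dsimp only; rw [hP.1, NPlace.restrict_superpose fun i => hP.1 x y ▸ hsup x y i],
    fun i x y => by dsimp only; rw [hP.2, NPlace.restrict_opc (hP.2 i x y ▸ hop i x y)]⟩

theorem applyStr_cons (x : G) (p : Fin n × G) (L : List (Fin n × G)) :
    M.applyStr x (p :: L) = M.applyStr (M.op p.1 x p.2) L := rfl

theorem mu_cons (i : Fin n) (p : Fin n × G) (L : List (Fin n × G)) :
    M.mu i (p :: L) = if p.1 = i then some (M.applyStr p.2 L) else M.mu i L := rfl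

variable (M) in
def muVec (L : List (Fin n × G)) : Fin n → Option G := fun j => M.mu j L

theorem muVec_cons (i : Fin n) (y : G) (L : List (Fin n × G)) :
    M.muVec ((i, y) :: L) = Function.update (M.muVec L) i (some (M.applyStr y L)) := by
  funext j
  by_cases hj : j = i
  · subst hj; simp [muVec, mu_cons]
  · simp [muVec, mu_cons, hj, Ne.symm hj]

theorem Representable.applyStr_congr (hM : M.Representable) {L₁ L₂ : List (Fin n × G)}
    (h : M.muVec L₁ = M.muVec L₂) (g : G) : M.applyStr g L₁ = M.applyStr g L₂ := by
  match L₁, L₂, h with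
  | [], [], _ => rfl
  | [], p :: L, h => simpa [muVec, mu] using congrFun h p.1
  | p :: L, [], h => simpa [muVec, mu] using congrFun h p.1
  | _ :: _, _ :: _, h => exact hM.1 _ _ (List.cons_ne_nil _ _) (List.cons_ne_nil _ _) (congrFun h) g

theorem Representable.applyStr_eq_sup (hn : 1 ≤ n) (hM : M.Representable)
    {L : List (Fin n × G)} {m : Fin n → G} (h : M.muVec L = fun i => some (m i)) (x : G) :
    M.applyStr x L = M.sup x m := by
  refine hM.2.2.2 L ?_ m (congrFun h) x
  rintro rfl
  simpa [muVec, mu] using congrFun h ⟨0, hn⟩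

theorem Representable.applyStr_sup (hM : M.Representable) (L : List (Fin n × G)) (x : G)
    (y : Fin n → G) : M.applyStr (M.sup x y) L = M.sup x fun i => M.applyStr (y i) L := by
  induction L generalizing y with
  | nil => rfl
  | cons p L ih => rw [applyStr_cons, hM.2.2.1, ih]; rfl

variable (M) in
def Realizable (s : Fin n → Option G) : Prop :=
  (∃ m : Fin n → G, s = fun i => some (m i)) ∨ ∃ L, M.muVec L = s

variable (M) in
open Classical in
/-- A `none` entry of `s` is a placeholder for a projection: `eval g s` is `g[s]` when `s` has no
placeholder, and `g ∘_{i₁} y₁ ⋯ ∘_{i_k} y_k` when `s` is the μ-vector of that composition string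
(`s = (none, …, none)` coming from the empty string). -/
noncomputable def eval (g : G) (s : Fin n → Option G) : G :=
  if h : ∃ m : Fin n → G, s = fun i => some (m i) then M.sup g h.choose
  else if h' : ∃ L, M.muVec L = s then M.applyStr g h'.choose else g

theorem realizable_none : M.Realizable fun _ => none := Or.inr ⟨[], rfl⟩

theorem eval_some (g : G) (m : Fin n → G) : M.eval g (fun i => some (m i)) = M.sup g m := by
  have h : ∃ m' : Fin n → G, (fun i => some (m i)) = fun i => some (m' i) := ⟨m, rfl⟩
  have hm : h.choose = m := funext fun i => Option.some_injective _ (congrFun h.choose_spec i).symm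
  rw [eval, dif_pos h, hm]

theorem Representable.eval_of_muVec (hn : 1 ≤ n) (hM : M.Representable)
    {L : List (Fin n × G)} {s : Fin n → Option G} (hL : M.muVec L = s) (g : G) :
    M.eval g s = M.applyStr g L := by
  by_cases hs : ∃ m : Fin n → G, s = fun i => some (m i)
  · obtain ⟨m, rfl⟩ := hs
    rw [eval_some, hM.applyStr_eq_sup hn hL]
  · have h : ∃ L, M.muVec L = s := ⟨L, hL⟩
    rw [eval, dif_neg hs, dif_pos h, hM.applyStr_congr (h.choose_spec.trans hL.symm)]

theorem Representable.eval_none (hn : 1 ≤ n) (hM : M.Representable) (g : G) :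
    M.eval g (fun _ => none) = g :=
  hM.eval_of_muVec hn (L := []) rfl g

theorem Realizable.eval_sup (hn : 1 ≤ n) (hM : M.Representable) {s : Fin n → Option G}
    (hs : M.Realizable s) (x : G) (y : Fin n → G) :
    M.eval (M.sup x y) s = M.sup x fun i => M.eval (y i) s := by
  rcases hs with ⟨m, rfl⟩ | ⟨L, rfl⟩
  · simp only [eval_some, M.superassoc]
  · simp only [hM.eval_of_muVec hn rfl, hM.applyStr_sup]

theorem Realizable.update_eval (hn : 1 ≤ n) (hM : M.Representable) {s : Fin n → Option G}
    (hs : M.Realizable s) (i : Fin n) (y : G) :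
    M.Realizable (Function.update s i (some (M.eval y s))) := by
  rcases hs with ⟨m, rfl⟩ | ⟨L, rfl⟩
  · refine Or.inl ⟨Function.update m i (M.eval y fun j => some (m j)), funext fun j => ?_⟩
    by_cases hj : j = i
    · subst hj; simp
    · simp [hj]
  · exact Or.inr ⟨(i, y) :: L, by rw [muVec_cons, hM.eval_of_muVec hn rfl]⟩

theorem Realizable.eval_update (hn : 1 ≤ n) (hM : M.Representable) {s : Fin n → Option G}
    (hs : M.Realizable s) (i : Fin n) (x y : G) :
    M.eval x (Function.update s i (some (M.eval y s))) = M.eval (M.op i x y) s := by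
  rcases hs with ⟨m, rfl⟩ | ⟨L, rfl⟩
  · have hupd : Function.update (fun j => some (m j)) i (some (M.eval y fun j => some (m j)))
        = fun j => some (Function.update m i (M.sup y m) j) := by
      funext j
      by_cases hj : j = i
      · subst hj; simp [eval_some]
      · simp [hj]
    rw [hupd, eval_some, eval_some, hM.2.1]
  · rw [hM.eval_of_muVec hn rfl y, ← muVec_cons, hM.eval_of_muVec hn rfl,
      hM.eval_of_muVec hn rfl, applyStr_cons]

variable (M) in
open Classical in
noncomputable def regularRep (g : G) : NPlace (Option G) n := fun s =>
  if M.Realizable s then some (some (M.eval g s)) else none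

theorem Representable.isRep_regularRep (hn : 1 ≤ n) (hM : M.Representable) :
    M.IsRep M.regularRep := by
  constructor
  · intro x y
    funext s
    by_cases hs : M.Realizable s
    · have hy : ∀ i, M.regularRep (y i) s = some (some (M.eval (y i) s)) := fun i => if_pos hs
      have hfull : M.Realizable fun i => some (M.eval (y i) s) := Or.inl ⟨_, rfl⟩
      have hsup : superpose (M.regularRep x) (fun i => M.regularRep (y i)) s
          = M.regularRep x fun i => some (M.eval (y i) s) := by
        simp only [superpose, hy, Option.isSome_some, Option.get_some, implies_true, dite_true]
      rw [hsup, regularRep, if_pos hs, regularRep, if_pos hfull, eval_some, hs.eval_sup hn hM]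
    · have hy : M.regularRep (y ⟨0, hn⟩) s = none := if_neg hs
      rw [regularRep, if_neg hs, superpose, dif_neg]
      intro hall
      simpa [hy] using hall ⟨0, hn⟩
  · intro i x y
    funext s
    by_cases hs : M.Realizable s
    · rw [opc, regularRep, if_pos hs, regularRep, if_pos hs, Option.bind_some, regularRep,
        if_pos (hs.update_eval hn hM i y), hs.eval_update hn hM]
    · rw [opc, regularRep, if_neg hs, regularRep, if_neg hs, Option.bind_none]

section DomainRep

variable {π : G → G → Prop}

theorem chiRel_of_rel {a b : G} (h : π a b) : M.chiRel π a b :=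
  Relation.TransGen.single ⟨b, ⟨b, h, _root_.id, IsTransl.id, rfl⟩, Or.inr rfl⟩

theorem chiRel_of_delta1 (hπ : ∀ a, π a a) {a b : G} (h : M.delta1 a b) : M.chiRel π a b :=
  Relation.TransGen.single ⟨b, ⟨a, hπ a, h⟩, Or.inr rfl⟩

theorem chiRel_of_delta2 (hπ : ∀ a, π a a) {a b : G} (h : M.delta2 a b) : M.chiRel π a b :=
  Relation.TransGen.single ⟨a, ⟨a, hπ a, _root_.id, IsTransl.id, rfl⟩, Or.inl h⟩

theorem chiRel_sup (hπ : ∀ a, π a a) (x : G) (v : Fin n → G) (i : Fin n) :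
    M.chiRel π (M.sup x v) (v i) :=
  chiRel_of_delta1 hπ ⟨_, IsTransl.id.step _ i x v, by simp⟩

theorem chiRel_applyStr_cons (hπ : ∀ a, π a a) (x y : G) (i : Fin n) (L : List (Fin n × G)) :
    M.chiRel π (M.applyStr x ((i, y) :: L)) (M.applyStr y L) :=
  chiRel_of_delta2 hπ ⟨x, _, i, _, List.cons_ne_nil _ _, by simp [mu_cons], Or.inl ⟨rfl, rfl⟩⟩

theorem chiRel_sup_op (hπ : ∀ a, π a a) (x y : G) (i : Fin n) (z : Fin n → G) :
    M.chiRel π (M.sup (M.op i x y) z) (M.sup y z) :=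
  chiRel_of_delta2 hπ ⟨x, [(i, y)], i, y, List.cons_ne_nil _ _, by simp [mu_cons, applyStr],
    Or.inr ⟨z, rfl, rfl⟩⟩

theorem Realizable.chiRel_eval_op (hn : 1 ≤ n) (hM : M.Representable) (hπ : ∀ a, π a a)
    {s : Fin n → Option G} (hs : M.Realizable s) (i : Fin n) (x y : G) :
    M.chiRel π (M.eval (M.op i x y) s) (M.eval y s) := by
  rcases hs with ⟨m, rfl⟩ | ⟨L, rfl⟩
  · simpa only [eval_some] using chiRel_sup_op hπ x y i m
  · simpa only [hM.eval_of_muVec hn rfl, applyStr_cons] using chiRel_applyStr_cons hπ x y i L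

theorem LRegular.applyStr (hreg : M.LRegular π) {x y : G} (h : π x y) (L : List (Fin n × G)) :
    π (M.applyStr x L) (M.applyStr y L) := by
  induction L generalizing x y with
  | nil => exact h
  | cons p L ih => exact ih ((hreg x y h).2 p.1 p.2)

theorem LRegular.eval (hreg : M.LRegular π) {x y : G} (h : π x y) (s : Fin n → Option G) :
    π (M.eval x s) (M.eval y s) := by
  unfold MengerSg.eval
  split
  · exact (hreg x y h).1 _
  · split
    · exact hreg.applyStr h _
    · exact h

variable (M) in
def chiGraph (π : G → G → Prop) : Set (G × Option G) :=
  {p | ∃ c, p.2 = some c ∧ M.chiRel π p.1 c}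

theorem mk_some_mem_chiGraph {b c : G} : (b, some c) ∈ M.chiGraph π ↔ M.chiRel π b c := by
  simp [chiGraph]

variable (M) in
noncomputable def domainRep (hn : 1 ≤ n) (π : G → G → Prop) (g : G) :
    NPlace (G × Option G) n :=
  NPlace.restrict (NPlace.amplify hn (M.regularRep g)) (M.chiGraph π)

theorem mem_outputsIn_amplify_regularRep (hn : 1 ≤ n) {g : G} {a : Fin n → G × Option G} :
    a ∈ NPlace.outputsIn (NPlace.amplify hn (M.regularRep g)) (M.chiGraph π) ↔
      (∀ i, (a i).1 = (a ⟨0, hn⟩).1) ∧ M.Realizable (fun i => (a i).2) ∧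
        M.chiRel π (a ⟨0, hn⟩).1 (M.eval g fun i => (a i).2) := by
  by_cases ha : ∀ i, (a i).1 = (a ⟨0, hn⟩).1
  · by_cases hs : M.Realizable fun i => (a i).2
    · simp [NPlace.outputsIn, NPlace.amplify, regularRep, chiGraph, ha, hs]
    · simp [NPlace.outputsIn, NPlace.amplify, regularRep, ha, hs]
  · simp [NPlace.outputsIn, NPlace.amplify, ha]

theorem Representable.isRep_domainRep (hn : 1 ≤ n) (hM : M.Representable) (hπ : ∀ a, π a a) :
    M.IsRep (M.domainRep hn π) := by
  refine ((hM.isRep_regularRep hn).amplify hn).restrict ?_ ?_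
  · intro x y i a ha
    rw [mem_outputsIn_amplify_regularRep] at ha ⊢
    obtain ⟨hconst, hs, hχ⟩ := ha
    rw [hs.eval_sup hn hM] at hχ
    exact ⟨hconst, hs, hχ.trans (chiRel_sup hπ x _ i)⟩
  · intro i x y a ha
    rw [mem_outputsIn_amplify_regularRep] at ha ⊢
    obtain ⟨hconst, hs, hχ⟩ := ha
    exact ⟨hconst, hs, hχ.trans (hs.chiRel_eval_op hn hM hπ i x y)⟩

theorem pdom_domainRep (hn : 1 ≤ n) (g : G) :
    pdom (M.domainRep hn π g) = {a | (∀ i, (a i).1 = (a ⟨0, hn⟩).1) ∧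
      M.Realizable (fun i => (a i).2) ∧ M.chiRel π (a ⟨0, hn⟩).1 (M.eval g fun i => (a i).2)} := by
  ext a
  rw [domainRep, NPlace.pdom_restrict, mem_outputsIn_amplify_regularRep]
  rfl

open Classical in
theorem Representable.domainRep_const_none (hn : 1 ≤ n) (hM : M.Representable) (g b : G) :
    M.domainRep hn π g (fun _ => (b, none)) =
      if M.chiRel π b g then some (b, some g) else none := by
  have hamp : NPlace.amplify hn (M.regularRep g) (fun _ => (b, none)) = some (b, some g) := by
    rw [NPlace.amplify_const, regularRep, if_pos realizable_none, hM.eval_none hn]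
    rfl
  by_cases hχ : M.chiRel π b g
  · have hmem := NPlace.mem_outputsIn.2 ⟨_, mk_some_mem_chiGraph.2 hχ, hamp⟩
    rw [domainRep, NPlace.restrict_of_mem hmem, hamp, if_pos hχ]
  · rw [domainRep, NPlace.restrict_of_notMem, if_neg hχ]
    rintro ⟨v, hv, hav⟩
    obtain rfl := Option.some_injective _ (hamp.symm.trans hav)
    exact hχ (mk_some_mem_chiGraph.1 hv)

theorem Representable.injective_domainRep (hn : 1 ≤ n) (hM : M.Representable)
    (hπ : ∀ a, π a a) : Function.Injective (M.domainRep hn π) := by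
  intro g₁ g₂ h
  have h₁₂ := congrFun h fun _ => (g₁, none)
  rw [hM.domainRep_const_none, hM.domainRep_const_none, if_pos (chiRel_of_rel (hπ g₁))] at h₁₂
  split_ifs at h₁₂
  simpa using h₁₂

theorem pdom_domainRep_eq_of_rel (hn : 1 ≤ n) (hπ : Equivalence π) (hreg : M.LRegular π)
    {g₁ g₂ : G} (h : π g₁ g₂) : pdom (M.domainRep hn π g₁) = pdom (M.domainRep hn π g₂) := by
  have key : ∀ {x y}, π x y → pdom (M.domainRep hn π x) ⊆ pdom (M.domainRep hn π y) := by
    intro x y hxy a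
    simp only [pdom_domainRep, Set.mem_ofPred_eq]
    exact fun ⟨hconst, hs, hχ⟩ => ⟨hconst, hs, hχ.trans (chiRel_of_rel (hreg.eval hxy _))⟩
  exact (key h).antisymm (key (hπ.symm h))

theorem Representable.rel_of_pdom_domainRep_eq (hn : 1 ≤ n) (hM : M.Representable)
    (hπ : ∀ a, π a a) (hχ : ∀ a b, M.chiRel π a b → M.chiRel π b a → π a b) {g₁ g₂ : G}
    (h : pdom (M.domainRep hn π g₁) = pdom (M.domainRep hn π g₂)) : π g₁ g₂ := by
  have hconst : ∀ b, M.chiRel π b g₁ ↔ M.chiRel π b g₂ := fun b => by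
    simpa [pdom, hM.domainRep_const_none] using Set.ext_iff.1 h fun _ => (b, none)
  exact hχ _ _ ((hconst g₁).1 (chiRel_of_rel (hπ g₁))) ((hconst g₂).2 (chiRel_of_rel (hπ g₂)))

theorem Representable.exists_injective_isRep (hn : 1 ≤ n) (hM : M.Representable)
    (hπ : Equivalence π) (hreg : M.LRegular π)
    (hχ : ∀ a b, M.chiRel π a b → M.chiRel π b a → π a b) :
    ∃ (A : Type u) (P : G → NPlace A n), M.IsRep P ∧ Function.Injective P ∧
      ∀ g₁ g₂, π g₁ g₂ ↔ pdom (P g₁) = pdom (P g₂) :=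
  ⟨_, M.domainRep hn π, hM.isRep_domainRep hn hπ.refl, hM.injective_domainRep hn hπ.refl,
    fun _ _ => ⟨pdom_domainRep_eq_of_rel hn hπ hreg, hM.rel_of_pdom_domainRep_eq hn hπ.refl hχ⟩⟩

end DomainRep

section Necessity

variable {A : Type u} {P : G → NPlace A n}

theorem IsRep.pdom_sup_mono (hP : M.IsRep P) {u v : G} (h : pdom (P u) ⊆ pdom (P v))
    (z : Fin n → G) : pdom (P (M.sup u z)) ⊆ pdom (P (M.sup v z)) := by
  rw [hP.1, hP.1]
  exact pdom_superpose_mono h _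

theorem IsRep.pdom_op_mono (hP : M.IsRep P) {u v : G} (h : pdom (P u) ⊆ pdom (P v)) (i : Fin n)
    (z : G) : pdom (P (M.op i u z)) ⊆ pdom (P (M.op i v z)) := by
  rw [hP.2, hP.2]
  exact pdom_opc_mono i h _

theorem IsRep.pdom_applyStr_mono (hP : M.IsRep P) {u v : G} (h : pdom (P u) ⊆ pdom (P v))
    (L : List (Fin n × G)) : pdom (P (M.applyStr u L)) ⊆ pdom (P (M.applyStr v L)) := by
  induction L generalizing u v with
  | nil => exact h
  | cons p L ih => exact ih (hP.pdom_op_mono h p.1 p.2)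

theorem IsRep.pdom_applyStr_subset_of_mu (hP : M.IsRep P) {L : List (Fin n × G)} {i : Fin n}
    {m : G} (hmu : M.mu i L = some m) (x : G) : pdom (P (M.applyStr x L)) ⊆ pdom (P m) := by
  induction L generalizing x with
  | nil => simp [mu] at hmu
  | cons p L ih =>
    rw [mu_cons] at hmu
    split_ifs at hmu
    · obtain rfl := Option.some_injective _ hmu
      refine hP.pdom_applyStr_mono ?_ L
      rw [hP.2]
      exact pdom_opc_subset _ _ _
    · exact ih hmu _

theorem IsRep.pdom_subset_of_isTransl (hP : M.IsRep P) {t : G → G} (ht : IsTransl M t) (x : G) :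
    pdom (P (t x)) ⊆ pdom (P x) := by
  induction ht with
  | id => exact subset_rfl
  | step t _ i a b ih =>
    rw [hP.1]
    refine (pdom_superpose_subset _ _ i).trans ?_
    simpa using ih

theorem IsRep.pdom_subset_of_delta1 (hP : M.IsRep P) {a b : G} (h : M.delta1 a b) :
    pdom (P a) ⊆ pdom (P b) := by
  obtain ⟨t, ht, rfl⟩ := h
  exact hP.pdom_subset_of_isTransl ht b

theorem IsRep.pdom_subset_of_delta2 (hP : M.IsRep P) {a b : G} (h : M.delta2 a b) :
    pdom (P a) ⊆ pdom (P b) := by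
  obtain ⟨x, L, i, m, -, hmu, ⟨rfl, rfl⟩ | ⟨z, rfl, rfl⟩⟩ := h
  · exact hP.pdom_applyStr_subset_of_mu hmu x
  · exact hP.pdom_sup_mono (hP.pdom_applyStr_subset_of_mu hmu x) z

theorem IsRep.pdom_subset_of_chiRel (hP : M.IsRep P) {π : G → G → Prop}
    (hπ : ∀ a b, π a b → pdom (P a) ⊆ pdom (P b)) {a b : G} (h : M.chiRel π a b) :
    pdom (P a) ⊆ pdom (P b) := by
  have step : ∀ {a c}, Relation.Comp (Relation.Comp π M.delta1) (fun a b => M.delta2 a b ∨ a = b)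
      a c → pdom (P a) ⊆ pdom (P c) := by
    rintro a c ⟨b, ⟨d, had, hdb⟩, hbc | rfl⟩
    · exact (hπ a d had).trans ((hP.pdom_subset_of_delta1 hdb).trans (hP.pdom_subset_of_delta2 hbc))
    · exact (hπ a d had).trans (hP.pdom_subset_of_delta1 hdb)
  induction h with
  | single h => exact step h
  | tail _ h ih => exact ih.trans (step h)

theorem IsRep.equivalence_lRegular_chiRel (hP : M.IsRep P) {π : G → G → Prop}
    (hπ : ∀ g₁ g₂, π g₁ g₂ ↔ pdom (P g₁) = pdom (P g₂)) :
    Equivalence π ∧ M.LRegular π ∧ ∀ a b, M.chiRel π a b → M.chiRel π b a → π a b := by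
  obtain rfl : π = fun g₁ g₂ => pdom (P g₁) = pdom (P g₂) :=
    funext fun _ => funext fun _ => propext (hπ _ _)
  refine ⟨⟨fun _ => rfl, Eq.symm, Eq.trans⟩, fun x y h => ⟨fun z => ?_, fun i z => ?_⟩,
    fun a b hab hba => ?_⟩
  · exact (hP.pdom_sup_mono h.subset z).antisymm (hP.pdom_sup_mono h.symm.subset z)
  · exact (hP.pdom_op_mono h.subset i z).antisymm (hP.pdom_op_mono h.symm.subset i z)
  · have hπ : ∀ a b, pdom (P a) = pdom (P b) → pdom (P a) ⊆ pdom (P b) := fun _ _ h => h.subset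
    exact (hP.pdom_subset_of_chiRel hπ hab).antisymm (hP.pdom_subset_of_chiRel hπ hba)

end Necessity

end MengerSg

/-- Theorem 6: a single relation π. -/
theorem theorem6 {G : Type u} {n : ℕ} (hn : 1 ≤ n)
    (M : MengerSg G n) (hM : M.Representable) (π : G → G → Prop) :
    ((∃ (A : Type u) (P : G → NPlace A n), M.IsRep P ∧
        ∀ g₁ g₂, π g₁ g₂ ↔ pdom (P g₁) = pdom (P g₂)) ↔
      (Equivalence π ∧ M.LRegular π ∧
        ∀ a b, chiRel M π a b → chiRel M π b a → π a b)) ∧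
    ((∃ (A : Type u) (P : G → NPlace A n), M.IsRep P ∧ Function.Injective P ∧
        ∀ g₁ g₂, π g₁ g₂ ↔ pdom (P g₁) = pdom (P g₂)) ↔
      (Equivalence π ∧ M.LRegular π ∧
        ∀ a b, chiRel M π a b → chiRel M π b a → π a b)) := by
  refine ⟨⟨fun ⟨_, _, hP, hπ⟩ => hP.equivalence_lRegular_chiRel hπ, fun ⟨hπ, hreg, hχ⟩ => ?_⟩,
    ⟨fun ⟨_, _, hP, _, hπ⟩ => hP.equivalence_lRegular_chiRel hπ,
      fun ⟨hπ, hreg, hχ⟩ => hM.exists_injective_isRep hn hπ hreg hχ⟩⟩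
  obtain ⟨A, P, hP, -, hdom⟩ := hM.exists_injective_isRep hn hπ hreg hχ
  exact ⟨A, P, hP, hdom⟩
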